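/- The ideal I equals the ideal of ℝ[z₁,…,z_d] generated by the polynomials q̃_Θ, where Θ ranges over all d×d integer matrices each of whose columns is a 0-1 vector with exactly one or exactly two entries equal to 1 and which satisfy det Θ = ±1. -/

import Mathlib

open MvPolynomial

/-- For a `d×d` integer matrix `Θ` each of whose columns is a 0-1 vector with exactly one
or two entries equal to 1, the modified polynomial `q̃_Θ(z) = ∏_{columns θ} r̃_θ(z)`, where
`r̃_θ(z) = (1+z_k)/2` if `θ = e_k` and `r̃_θ(z) = (z_j+z_k)/2` if `θ = e_j + e_k`, `j ≠ k`. -/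
noncomputable def qtilde {d : ℕ} (Θ : Matrix (Fin d) (Fin d) ℤ) : MvPolynomial (Fin d) ℝ :=
  ∏ c : Fin d,
    (C (1 / 2 : ℝ) *
      ((if (∑ i, Θ i c) = 1 then 1 else 0) + ∑ i : Fin d, C ((Θ i c : ℝ)) * X i))

/-!
Write `ε ∈ {±1}^d` as `ε = 1 - 2y` with `y ∈ {0,1}^d`. The factor of `q̃_Θ` at a column `θ` then
evaluates to `1 - θ ⬝ y`, so `q̃_Θ(ε) ≠ 0` forces `y Θ ≡ 0 (mod 2)`, hence `y = 0` because `det Θ`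
is odd: every generator vanishes on `Z'`.

Conversely, `q₀ = ∏_c (1 + z_c)/2` is a generator and is the indicator of `(1,…,1)` on the cube, so
for `p ∈ I` the polynomial `p - p(1,…,1) q₀` vanishes on the whole cube and, by the Combinatorial
Nullstellensatz, lies in the ideal of the `z_j² - 1 = 2 (z_j - 1) (1 + z_j)/2`. Membership of
`(z_j - 1) ∏_{c ∈ T} r̃_{θ_c}` for a partial choice of columns `θ_c = e_c` or `e_x + e_c`, with
`x` before `c` in an order starting at `j`, follows by induction on the number of free columns:
`r̃_{e_p} + r̃_{e_x} - r̃_{e_x + e_p} = 1` fixes one more column (`x` before `p`), and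
`z_j - 1 = 2 (r̃_{e_j + e_i} - r̃_{e_i})` fixes the last one. The completed matrices are
triangular after reordering, with unit diagonal.
-/

open Matrix
open scoped Finset

theorem even_of_forall_even_vecMul {n : Type*} [Fintype n] [DecidableEq n]
    {Θ : Matrix n n ℤ} (hΘ : Odd Θ.det) {y : n → ℤ} (hy : ∀ c, Even ((y ᵥ* Θ) c)) (i : n) :
    Even (y i) := by
  let φ := Int.castRingHom (ZMod 2)
  have hdet : (Θ.map φ).det ≠ 0 := by
    rw [show (Θ.map φ).det = φ Θ.det from (RingHom.map_det φ Θ).symm, eq_intCast, ne_eq,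
      ZMod.intCast_eq_zero_iff_even, Int.not_even_iff_odd]
    exact hΘ
  have hker : (φ ∘ y) ᵥ* Θ.map φ = 0 := funext fun c => by
    rw [← RingHom.map_vecMul, Pi.zero_apply, eq_intCast, ZMod.intCast_eq_zero_iff_even]
    exact hy c
  by_contra hi
  refine hdet (exists_vecMul_eq_zero_iff.mp ⟨φ ∘ y, fun h => hi ?_, hker⟩)
  rw [← ZMod.intCast_eq_zero_iff_even]
  exact congrFun h i

section

variable {d : ℕ}

theorem eval_qtilde (Θ : Matrix (Fin d) (Fin d) ℤ) (ε : Fin d → ℝ) :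
    eval ε (qtilde Θ) =
      ∏ c, 1 / 2 * ((if ∑ i, Θ i c = 1 then 1 else 0) + ∑ i, (Θ i c : ℝ) * ε i) := by
  simp [qtilde, apply_ite (eval ε)]

theorem eval_qtilde_eq_zero {Θ : Matrix (Fin d) (Fin d) ℤ} (h01 : ∀ i c, Θ i c = 0 ∨ Θ i c = 1)
    (hsum : ∀ c, ∑ i, Θ i c = 1 ∨ ∑ i, Θ i c = 2) (hdet : Odd Θ.det) {ε : Fin d → ℝ}
    (hε : ∀ i, ε i = -1 ∨ ε i = 1) (hne : ε ≠ fun _ => 1) : eval ε (qtilde Θ) = 0 := by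
  set y : Fin d → ℤ := fun i => if ε i = 1 then 0 else 1
  have hy01 : ∀ i, y i = 0 ∨ y i = 1 := fun i => by
    unfold y; split_ifs
    exacts [Or.inl rfl, Or.inr rfl]
  have hεy : ∀ i, ε i = 1 - 2 * y i := fun i => by rcases hε i with h | h <;> norm_num [y, h]
  have hfactor : ∀ c, 1 / 2 * ((if ∑ i, Θ i c = 1 then 1 else 0) + ∑ i, (Θ i c : ℝ) * ε i) =
      1 - ((y ᵥ* Θ) c : ℤ) := fun c => by
    have h2 : (if ∑ i, Θ i c = 1 then 1 else 0) + ((∑ i, Θ i c : ℤ) : ℝ) = 2 := by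
      rcases hsum c with h | h <;> norm_num [h]
    have hlin : ∑ i, (Θ i c : ℝ) * ε i = ((∑ i, Θ i c : ℤ) : ℝ) - 2 * ((y ᵥ* Θ) c : ℤ) := by
      simp only [vecMul, dotProduct, hεy]
      push_cast
      rw [Finset.mul_sum, ← Finset.sum_sub_distrib]
      exact Finset.sum_congr rfl fun i _ => by ring
    rw [hlin]
    linear_combination h2 / 2
  rw [eval_qtilde]
  by_contra hprod
  have heven : ∀ c, Even ((y ᵥ* Θ) c) := fun c => by
    have hne1 : (y ᵥ* Θ) c ≠ 1 := fun h1 =>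
      Finset.prod_ne_zero_iff.mp hprod c (Finset.mem_univ c) (by rw [hfactor, h1]; norm_num)
    have hbounds : 0 ≤ (y ᵥ* Θ) c ∧ (y ᵥ* Θ) c ≤ ∑ i, Θ i c := by
      simp only [vecMul, dotProduct]
      refine ⟨Finset.sum_nonneg fun i _ => ?_, Finset.sum_le_sum fun i _ => ?_⟩ <;>
        rcases h01 i c with h | h <;> rcases hy01 i with h' | h' <;> simp [h, h']
    rw [Int.even_iff]
    rcases hsum c with h | h <;> omega
  refine hne (funext fun i => ?_)
  have := (even_of_forall_even_vecMul hdet heven i).two_dvd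
  rw [hεy i]
  rcases hy01 i with h | h
  · simp [h]
  · norm_num [h] at this

noncomputable def colFactor (o : Option (Fin d)) (c : Fin d) : MvPolynomial (Fin d) ℝ :=
  C (1 / 2) * (o.elim 1 X + X c)

/-- Column `c` is `e_c`, or `e_c + e_x` if `G c = some x`; its factor in `qtilde` is
`colFactor (G c) c`. -/
def parentMatrix (G : Fin d → Option (Fin d)) : Matrix (Fin d) (Fin d) ℤ :=
  of fun i c => (if i = c then 1 else 0) + if G c = some i then 1 else 0

def ParentsPrecede (σ : Equiv.Perm (Fin d)) (G : Fin d → Option (Fin d)) : Prop :=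
  ∀ c x, G c = some x → σ x < σ c

theorem parentsPrecede_none (σ : Equiv.Perm (Fin d)) : ParentsPrecede σ fun _ => none :=
  fun _ _ h => nomatch h

theorem ParentsPrecede.ne_self {σ : Equiv.Perm (Fin d)} {G : Fin d → Option (Fin d)}
    (hG : ParentsPrecede σ G) (c : Fin d) : G c ≠ some c :=
  fun h => (hG c c h).false

theorem ParentsPrecede.update {σ : Equiv.Perm (Fin d)} {G : Fin d → Option (Fin d)}
    (hG : ParentsPrecede σ G) {z : Fin d} {o : Option (Fin d)} (ho : ∀ x, o = some x → σ x < σ z) :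
    ParentsPrecede σ (Function.update G z o) := by
  intro c x h
  rcases eq_or_ne c z with rfl | hcz
  · exact ho x (by simpa using h)
  · exact hG c x (by simpa [hcz] using h)

theorem det_parentMatrix {σ : Equiv.Perm (Fin d)} {G : Fin d → Option (Fin d)}
    (hG : ParentsPrecede σ G) : (parentMatrix G).det = 1 := by
  rw [← det_submatrix_equiv_self σ.symm, det_of_isUpperTriangular]
  · refine Finset.prod_eq_one fun c _ => ?_
    simp [parentMatrix, hG.ne_self]
  · intro a b hba
    have hne : σ.symm a ≠ σ.symm b := σ.symm.injective.ne (ne_of_gt hba)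
    have hG' : G (σ.symm b) ≠ some (σ.symm a) := fun h =>
      lt_asymm (by simpa using hG _ _ h) hba
    simp [parentMatrix, hne, hG']

theorem qtilde_parentMatrix (G : Fin d → Option (Fin d)) :
    qtilde (parentMatrix G) = ∏ c, colFactor (G c) c := by
  refine Finset.prod_congr rfl fun c _ => ?_
  rcases hGc : G c with _ | x <;>
    simp [parentMatrix, colFactor, hGc, add_mul, Finset.sum_add_distrib, add_comm]

variable (d) in
noncomputable def qtildeIdeal : Ideal (MvPolynomial (Fin d) ℝ) :=
  Ideal.span {q | ∃ Θ : Matrix (Fin d) (Fin d) ℤ,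
    (∀ i c, Θ i c = 0 ∨ Θ i c = 1) ∧
    (∀ c, (∑ i, Θ i c) = 1 ∨ (∑ i, Θ i c) = 2) ∧
    (Θ.det = 1 ∨ Θ.det = -1) ∧
    q = qtilde Θ}

theorem prod_colFactor_mem {σ : Equiv.Perm (Fin d)} {G : Fin d → Option (Fin d)}
    (hG : ParentsPrecede σ G) : ∏ c, colFactor (G c) c ∈ qtildeIdeal d := by
  refine Ideal.subset_span ⟨parentMatrix G, fun i c => ?_, fun c => ?_,
    Or.inl (det_parentMatrix hG), (qtilde_parentMatrix G).symm⟩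
  · rcases eq_or_ne i c with rfl | h
    · simp [parentMatrix, hG.ne_self]
    · by_cases h' : G c = some i <;> simp [parentMatrix, h, h']
  · rcases hGc : G c with _ | x <;> simp [parentMatrix, hGc, Finset.sum_add_distrib]

theorem C_half_mul_two : C (1 / 2 : ℝ) * 2 = (1 : MvPolynomial (Fin d) ℝ) := by
  rw [← map_ofNat C 2, ← C_mul]
  norm_num

theorem colFactor_none_add_colFactor_none_sub (p x : Fin d) :
    colFactor none p + colFactor none x - colFactor (some x) p = 1 := by
  simp only [colFactor, Option.elim_none, Option.elim_some]
  linear_combination C_half_mul_two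

theorem two_mul_colFactor_some_sub_colFactor_none (x c : Fin d) :
    2 * (colFactor (some x) c - colFactor none c) = X x - 1 := by
  simp only [colFactor, Option.elim_none, Option.elim_some]
  linear_combination (X x - 1) * C_half_mul_two

theorem prod_insert_update_colFactor {T : Finset (Fin d)} {z : Fin d} (hz : z ∉ T)
    (G : Fin d → Option (Fin d)) (o : Option (Fin d)) :
    ∏ c ∈ insert z T, colFactor (Function.update G z o c) c =
      colFactor o z * ∏ c ∈ T, colFactor (G c) c := by
  rw [Finset.prod_insert hz, Function.update_self]
  congr 1
  exact Finset.prod_congr rfl fun c hc => by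
    rw [Function.update_of_ne (ne_of_mem_of_not_mem hc hz)]

theorem X_sub_one_mul_prod_colFactor_mem {σ : Equiv.Perm (Fin d)} {j : Fin d}
    (hj : ∀ c, σ j ≤ σ c) {T : Finset (Fin d)} {G : Fin d → Option (Fin d)}
    (hG : ParentsPrecede σ G) (hjT : j ∈ T) {n : ℕ} (hcard : #(Finset.univ \ T) = n) :
    (X j - 1) * ∏ c ∈ T, colFactor (G c) c ∈ qtildeIdeal d := by
  induction n generalizing T G with
  | zero =>
    have hT : T = Finset.univ := by simpa [Finset.sdiff_eq_empty_iff_subset] using hcard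
    subst hT
    exact Ideal.mul_mem_left _ _ (prod_colFactor_mem hG)
  | succ n ih =>
    set P := ∏ c ∈ T, colFactor (G c) c
    obtain ⟨i, hi⟩ : (Finset.univ \ T).Nonempty := Finset.card_pos.mp (by omega)
    have hiT : i ∉ T := (Finset.mem_sdiff.mp hi).2
    by_cases hrest : ∃ x ∉ T, x ≠ i
    · obtain ⟨y, hyT, hyi⟩ := hrest
      obtain ⟨p, x, hpT, hxT, hxp⟩ : ∃ p x, p ∉ T ∧ x ∉ T ∧ σ x < σ p := by
        rcases lt_or_gt_of_ne (σ.injective.ne hyi) with h | h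
        exacts [⟨i, y, hiT, hyT, h⟩, ⟨y, i, hyT, hiT, h⟩]
      have hfix : ∀ z ∉ T, ∀ o : Option (Fin d), (∀ w, o = some w → σ w < σ z) →
          (X j - 1) * (colFactor o z * P) ∈ qtildeIdeal d := fun z hz o ho => by
        have hcard' : #(Finset.univ \ insert z T) = n := by
          rw [Finset.sdiff_insert, Finset.card_erase_of_mem (by simpa using hz), hcard]
          rfl
        simpa [prod_insert_update_colFactor hz] using
          ih (hG.update ho) (Finset.mem_insert_of_mem hjT) hcard'
      have hsplit : (X j - 1) * P = (X j - 1) * (colFactor none p * P) +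
          (X j - 1) * (colFactor none x * P) - (X j - 1) * (colFactor (some x) p * P) := by
        linear_combination -(X j - 1) * P * colFactor_none_add_colFactor_none_sub p x
      rw [hsplit]
      exact sub_mem (add_mem (hfix p hpT none (by simp)) (hfix x hxT none (by simp)))
        (hfix p hpT (some x) (by simpa using hxp))
    · push Not at hrest
      have hT : insert i T = Finset.univ :=
        Finset.eq_univ_of_forall fun c => by
          by_cases hc : c ∈ T
          · exact Finset.mem_insert_of_mem hc
          · simp [hrest c hc]
      have hji : σ j < σ i := (hj i).lt_of_ne (σ.injective.ne (ne_of_mem_of_not_mem hjT hiT))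
      have hfull : ∀ o : Option (Fin d), (∀ w, o = some w → σ w < σ i) →
          colFactor o i * P ∈ qtildeIdeal d := fun o ho => by
        simpa [← hT, prod_insert_update_colFactor hiT] using prod_colFactor_mem (hG.update ho)
      rw [← two_mul_colFactor_some_sub_colFactor_none j i, mul_assoc, sub_mul]
      exact Ideal.mul_mem_left _ _ (sub_mem (hfull _ (by simpa using hji)) (hfull none (by simp)))

theorem X_sub_one_mul_colFactor_none_mem (j : Fin d) :
    (X j - 1) * colFactor none j ∈ qtildeIdeal d := by
  let σ := Equiv.swap j ⟨0, j.pos⟩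
  have hj : ∀ c, σ j ≤ σ c := fun c => by
    simp only [σ, Equiv.swap_apply_left]
    exact Nat.zero_le _
  simpa using X_sub_one_mul_prod_colFactor_mem hj (parentsPrecede_none σ)
    (Finset.mem_singleton_self j) rfl

theorem mem_qtildeIdeal_of_eval_eq_zero {f : MvPolynomial (Fin d) ℝ}
    (hf : ∀ ε : Fin d → ℝ, (∀ i, ε i = -1 ∨ ε i = 1) → eval ε f = 0) : f ∈ qtildeIdeal d := by
  obtain ⟨h, -, rfl⟩ := combinatorial_nullstellensatz_exists_linearCombination
    (fun _ => {-1, 1}) (fun _ => Finset.insert_nonempty _ _) f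
    (fun ε hε => hf ε (by simpa using hε))
  rw [Finsupp.linearCombination_apply]
  refine Ideal.sum_mem _ fun i _ => Ideal.mul_mem_left _ _ ?_
  have hprod : ∏ r ∈ ({-1, 1} : Finset ℝ), (X i - C r) = 2 * ((X i - 1) * colFactor none i) := by
    rw [Finset.prod_pair (by norm_num)]
    simp only [colFactor, Option.elim_none, map_neg, map_one]
    linear_combination -(X i ^ 2 - 1) * C_half_mul_two
  rw [hprod]
  exact Ideal.mul_mem_left _ _ (X_sub_one_mul_colFactor_none_mem i)

theorem eval_eq_zero_of_mem_qtildeIdeal {f : MvPolynomial (Fin d) ℝ} (hf : f ∈ qtildeIdeal d)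
    {ε : Fin d → ℝ} (hε : ∀ i, ε i = -1 ∨ ε i = 1) (hne : ε ≠ fun _ => 1) : eval ε f = 0 := by
  refine RingHom.mem_ker.mp ((Ideal.span_le.mpr ?_) hf)
  rintro _ ⟨Θ, h01, hsum, hdet, rfl⟩
  refine eval_qtilde_eq_zero h01 hsum ?_ hε hne
  rcases hdet with h | h <;> simp [h]

end

theorem stmt_7_general (d : ℕ) (p : MvPolynomial (Fin d) ℝ) :
    (∀ ε : Fin d → ℝ, (∀ i, ε i = -1 ∨ ε i = 1) → ε ≠ (fun _ => 1) →
      eval ε p = 0) ↔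
    p ∈ Ideal.span
      {q : MvPolynomial (Fin d) ℝ | ∃ Θ : Matrix (Fin d) (Fin d) ℤ,
        (∀ i c, Θ i c = 0 ∨ Θ i c = 1) ∧
        (∀ c, (∑ i, Θ i c) = 1 ∨ (∑ i, Θ i c) = 2) ∧
        (Θ.det = 1 ∨ Θ.det = -1) ∧
        q = qtilde Θ} := by
  change _ ↔ p ∈ qtildeIdeal d
  refine ⟨fun hp => ?_, fun hp ε hε hne => eval_eq_zero_of_mem_qtildeIdeal hp hε hne⟩
  set q₀ := ∏ c : Fin d, colFactor none c
  set a := eval (fun _ => 1) p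
  have hq₀ : q₀ ∈ qtildeIdeal d := prod_colFactor_mem (parentsPrecede_none (Equiv.refl _))
  have hcube : ∀ ε : Fin d → ℝ, (∀ i, ε i = -1 ∨ ε i = 1) → eval ε (p - C a * q₀) = 0 :=
    fun ε hε => by
    by_cases hne : ε = fun _ => 1
    · subst hne
      norm_num [a, q₀, colFactor]
    · rw [map_sub, map_mul, hp ε hε hne, eval_eq_zero_of_mem_qtildeIdeal hq₀ hε hne, mul_zero,
        sub_zero]
  simpa using add_mem (mem_qtildeIdeal_of_eval_eq_zero hcube) (Ideal.mul_mem_left _ (C a) hq₀)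

/-- The ideal `I` of polynomials vanishing on `Z' = {ε ∈ {−1,1}^d : ε ≠ (1,…,1)}`
equals the ideal generated by the polynomials `q̃_Θ`, where `Θ` ranges over the `d×d`
integer matrices whose columns are 0-1 vectors with exactly one or two entries equal
to 1 and which satisfy `det Θ = ±1`. -/
theorem stmt_7 (d : ℕ) (hd : 1 ≤ d) (p : MvPolynomial (Fin d) ℝ) :
    (∀ ε : Fin d → ℝ, (∀ i, ε i = -1 ∨ ε i = 1) → ε ≠ (fun _ => 1) →
      eval ε p = 0) ↔
    p ∈ Ideal.span
      {q : MvPolynomial (Fin d) ℝ | ∃ Θ : Matrix (Fin d) (Fin d) ℤ,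
        (∀ i c, Θ i c = 0 ∨ Θ i c = 1) ∧
        (∀ c, (∑ i, Θ i c) = 1 ∨ (∑ i, Θ i c) = 2) ∧
        (Θ.det = 1 ∨ Θ.det = -1) ∧
        q = qtilde Θ} :=
  stmt_7_general d p
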